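/- Let p be a prime and n ≥ 1. The number of hyperbolic bases of (ZMod p)^{2n}, i.e., of ordered 2n-tuples (x_1,…,x_n,y_1,…,y_n) of vectors of (ZMod p)^{2n} satisfying ⟨x_i,y_j⟩ = δ_{ij}, ⟨x_i,x_j⟩ = 0 and ⟨y_i,y_j⟩ = 0 for all i,j, equals p^{n²} · Π_{i=1}^{n} (p^{2i} − 1). (This is the order of the symplectic group Sp_{2n}(ZMod p).) -/

import Mathlib

open scoped BigOperators

/-- The phase space `(ZMod p)^n × (ZMod p)^n`, representing `(ZMod p)^{2n}`
written as pairs `(a|b)`. -/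
abbrev PV (p n : ℕ) := (Fin n → ZMod p) × (Fin n → ZMod p)

/-- The symplectic inner product `⟨x,y⟩ = ∑ i, (b i * c i - a i * d i)`
for `x = (a|b)`, `y = (c|d)`. -/
def symp {p n : ℕ} (x y : PV p n) : ZMod p :=
  ∑ i, (x.2 i * y.1 i - x.1 i * y.2 i)

/-- `ξ_1,…,ξ_n, η_1,…,η_n` form a hyperbolic basis of `(ZMod p)^{2n}`. -/
def IsHyperbolicBasis {p n : ℕ} (ξ η : Fin n → PV p n) : Prop :=
  LinearIndependent (ZMod p) (Sum.elim ξ η) ∧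
  Submodule.span (ZMod p) (Set.range (Sum.elim ξ η)) = ⊤ ∧
  (∀ i j, symp (ξ i) (η j) = if i = j then 1 else 0) ∧
  (∀ i j, symp (ξ i) (ξ j) = 0) ∧
  (∀ i j, symp (η i) (η j) = 0)

/-- Symplectic orthogonal complement `W^⊥` of a submodule `W`. -/
def sympOrtho {p n : ℕ} (W : Submodule (ZMod p) (PV p n)) :
    Submodule (ZMod p) (PV p n) where
  carrier := {y | ∀ x ∈ W, symp x y = 0}
  zero_mem' := by intro x hx; simp [symp]
  add_mem' := by
    intro a b ha hb x hx
    have h : symp x (a + b) = symp x a + symp x b := by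
      unfold symp
      rw [← Finset.sum_add_distrib]
      refine Finset.sum_congr rfl ?_
      intro i _
      simp only [Prod.fst_add, Prod.snd_add, Pi.add_apply]
      ring
    rw [h, ha x hx, hb x hx, add_zero]
  smul_mem' := by
    intro c a ha x hx
    have h : symp x (c • a) = c * symp x a := by
      unfold symp
      rw [Finset.mul_sum]
      refine Finset.sum_congr rfl ?_
      intro i _
      simp only [Prod.smul_fst, Prod.smul_snd, Pi.smul_apply, smul_eq_mul]
      ring
    rw [h, ha x hx, mul_zero]

/-- `ω = exp(2πi/p)`. -/
noncomputable def omg (p : ℕ) : ℂ := Complex.exp (2 * Real.pi * Complex.I / p)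

/-- The matrix `XZⁿ(v)` for `v = (a|b)`: entry `(r,c)` equals `ω^{b·c}`
if `r = c + a`, and `0` otherwise. -/
noncomputable def XZ {p n : ℕ} (v : PV p n) :
    Matrix (Fin n → ZMod p) (Fin n → ZMod p) ℂ :=
  fun r c => if r = c + v.1 then omg p ^ (∑ i, v.2 i * c i).val else 0

/-- The standard basis vector `δ_u`. -/
def delta {p n : ℕ} (u : Fin n → ZMod p) : (Fin n → ZMod p) → ℂ :=
  fun v => if v = u then 1 else 0

/-- Ordered product `∏_{i=1}^n (M i)^{u_i}` of matrices, powers via integer lifts. -/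
noncomputable def prodPow {p n : ℕ} [NeZero p]
    (M : Fin n → Matrix (Fin n → ZMod p) (Fin n → ZMod p) ℂ)
    (u : Fin n → ZMod p) : Matrix (Fin n → ZMod p) (Fin n → ZMod p) ℂ :=
  ((List.finRange n).map (fun i => (M i) ^ (u i).val)).prod

/-- Splice `e ∈ (ZMod p)^{n-k}` and `x ∈ (ZMod p)^k` into a vector of `(ZMod p)^n`,
identifying `(ZMod p)^n` with `(ZMod p)^{n-k} × (ZMod p)^k`. -/
def splice {p n k : ℕ} (hk : k ≤ n) (e : Fin (n - k) → ZMod p)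
    (x : Fin k → ZMod p) : Fin n → ZMod p :=
  fun i => Fin.append e x (Fin.cast (by omega) i)

/-- The index `n - k + i` of `Fin n`, for `i : Fin k`. -/
def lastIdx {n k : ℕ} (hk : k ≤ n) (i : Fin k) : Fin n :=
  ⟨n - k + i.1, by have := i.2; omega⟩

/-- Kronecker (tensor) product of two vectors. -/
def vecKron {ι : Type*} (f g : ι → ℂ) : ι × ι → ℂ := fun q => f q.1 * g q.2

/-- Entrywise complex conjugate of a vector. -/
def conjVec {ι : Type*} (f : ι → ℂ) : ι → ℂ := fun i => (starRingEnd ℂ) (f i)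

/-! Let `B` be a nondegenerate alternating form on a `2m`-dimensional space over a field with `q`
elements. The first pair `(x, y)` of a hyperbolic family is any pair with `B x y = 1`; there are
`(q^{2m} - 1) q^{2m-1}` of them (`x ≠ 0`, then `y` ranges over an affine hyperplane). The rest of
the family is a hyperbolic family of length `m - 1` in the orthogonal complement of `span {x, y}`,
on which `B` is again nondegenerate and alternating, of dimension `2m - 2`. Induction on `m` gives
`q^{m²} ∏_{i=1}^m (q^{2i} - 1)`. -/

open Module Submodule
open LinearMap (BilinForm)

theorem Module.Dual.card_fiber_of_ne_zero {K V : Type*} [Field K] [AddCommGroup V] [Module K V]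
    [FiniteDimensional K V] {f : Module.Dual K V} (hf : f ≠ 0) (c : K) :
    Nat.card {v : V // f v = c} = Nat.card K ^ (finrank K V - 1) := by
  obtain ⟨v₀, hv₀⟩ := LinearMap.range_eq_top.1 (Module.Dual.range_eq_top_of_ne_zero hf) c
  let e : {v : V // f v = c} ≃ LinearMap.ker f :=
    { toFun v := ⟨v - v₀, by simp [v.2, hv₀]⟩
      invFun w := ⟨w + v₀, by simp [LinearMap.mem_ker.1 w.2, hv₀]⟩
      left_inv _ := by ext; simp
      right_inv _ := by ext; simp }
  rw [Nat.card_congr e, natCard_eq_pow_finrank (K := K),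
    ← Module.Dual.finrank_ker_add_one_of_ne_zero hf, Nat.add_sub_cancel]

namespace LinearMap.BilinForm

variable {K V : Type*} [Field K] [AddCommGroup V] [Module K V] {B : BilinForm K V}

def IsHyperbolicFamily (B : BilinForm K V) {m : ℕ} (ξ η : Fin m → V) : Prop :=
  (∀ i j, B (ξ i) (η j) = if i = j then 1 else 0) ∧
  (∀ i j, B (ξ i) (ξ j) = 0) ∧
  (∀ i j, B (η i) (η j) = 0)

abbrev HyperbolicFamilies (B : BilinForm K V) (m : ℕ) : Type _ :=
  {ξη : (Fin m → V) × (Fin m → V) // B.IsHyperbolicFamily ξη.1 ξη.2}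

theorem mem_orthogonal_span_pair {x y v : V} :
    v ∈ B.orthogonal (span K {x, y}) ↔ B x v = 0 ∧ B y v = 0 := by
  refine ⟨fun h => ⟨h x (subset_span (by simp)), h y (subset_span (by simp))⟩, ?_⟩
  rintro ⟨hx, hy⟩ _ hw
  obtain ⟨a, b, rfl⟩ := mem_span_pair.1 hw
  simp [hx, hy]

theorem isHyperbolicFamily_succ_iff (hB : B.IsAlt) {m : ℕ} {ξ η : Fin (m + 1) → V} :
    B.IsHyperbolicFamily ξ η ↔ B (ξ 0) (η 0) = 1 ∧
      (∀ i : Fin m, ξ i.succ ∈ B.orthogonal (span K {ξ 0, η 0}) ∧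
        η i.succ ∈ B.orthogonal (span K {ξ 0, η 0})) ∧
      B.IsHyperbolicFamily (Fin.tail ξ) (Fin.tail η) := by
  simp only [IsHyperbolicFamily, Fin.forall_fin_succ, mem_orthogonal_span_pair, Fin.tail,
    hB.self_eq_zero, Fin.succ_ne_zero, (Fin.succ_ne_zero _).symm, Fin.succ_inj, if_true, if_false,
    hB.eq_iff (x := ξ (Fin.succ _)) (y := η 0), hB.eq_iff (x := ξ (Fin.succ _)) (y := ξ 0),
    hB.eq_iff (x := η (Fin.succ _)) (y := η 0), forall_and]
  tauto

def hyperbolicFamiliesSuccEquiv (hB : B.IsAlt) (m : ℕ) :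
    (Σ z : {z : V × V // B z.1 z.2 = 1},
      (B.restrict (B.orthogonal (span K {z.1.1, z.1.2}))).HyperbolicFamilies m) ≃
      B.HyperbolicFamilies (m + 1) where
  toFun s := ⟨(Fin.cons s.1.1.1 (fun i => s.2.1.1 i), Fin.cons s.1.1.2 (fun i => s.2.1.2 i)),
    (isHyperbolicFamily_succ_iff hB).2
      ⟨s.1.2, fun i => ⟨(s.2.1.1 i).2, (s.2.1.2 i).2⟩, s.2.2⟩⟩
  invFun t :=
    have h := (isHyperbolicFamily_succ_iff hB).1 t.2
    ⟨⟨(t.1.1 0, t.1.2 0), h.1⟩,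
      ⟨fun i => ⟨t.1.1 i.succ, (h.2.1 i).1⟩, fun i => ⟨t.1.2 i.succ, (h.2.1 i).2⟩⟩, h.2.2⟩
  left_inv _ := rfl
  right_inv _ := Subtype.ext (Prod.ext (Fin.cons_self_tail _) (Fin.cons_self_tail _))

theorem IsAlt.eq_zero_of_orthogonal_pair (hB : B.IsAlt) {x y : V} (h : B x y = 1) {a b : K}
    (hx : B x (a • x + b • y) = 0) (hy : B y (a • x + b • y) = 0) : a = 0 ∧ b = 0 := by
  have hyx : B y x = -1 := by rw [← hB.neg_eq, h]
  simp only [map_add, map_smul, smul_eq_mul, h, hyx, hB.self_eq_zero, mul_zero, mul_one, mul_neg,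
    zero_add, add_zero, neg_eq_zero] at hx hy
  exact ⟨hy, hx⟩

theorem IsAlt.linearIndependent_pair (hB : B.IsAlt) {x y : V} (h : B x y = 1) :
    LinearIndependent K ![x, y] :=
  LinearIndependent.pair_iff.2 fun a b hab =>
    hB.eq_zero_of_orthogonal_pair h (by simp [hab]) (by simp [hab])

theorem IsAlt.disjoint_span_pair_orthogonal (hB : B.IsAlt) {x y : V} (h : B x y = 1) :
    Disjoint (span K {x, y}) (B.orthogonal (span K {x, y})) := by
  refine disjoint_def.2 fun v hv hvo => ?_
  obtain ⟨a, b, rfl⟩ := mem_span_pair.1 hv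
  obtain ⟨hx, hy⟩ := mem_orthogonal_span_pair.1 hvo
  obtain ⟨rfl, rfl⟩ := hB.eq_zero_of_orthogonal_pair h hx hy
  simp

section FiniteDimensional

variable [FiniteDimensional K V]

theorem IsAlt.nondegenerate_restrict_orthogonal_span_pair (hB : B.IsAlt) (hnd : B.Nondegenerate)
    {x y : V} (h : B x y = 1) : (B.restrict (B.orthogonal (span K {x, y}))).Nondegenerate := by
  refine B.nondegenerate_restrict_of_disjoint_orthogonal hB.isRefl ?_
  rw [orthogonal_orthogonal hnd hB.isRefl]
  exact (hB.disjoint_span_pair_orthogonal h).symm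

theorem IsAlt.finrank_orthogonal_span_pair (hB : B.IsAlt) (hnd : B.Nondegenerate)
    {x y : V} (h : B x y = 1) : finrank K (B.orthogonal (span K {x, y})) = finrank K V - 2 := by
  rw [finrank_orthogonal hnd, ← Matrix.range_cons_cons_empty x y ![],
    finrank_span_eq_card (hB.linearIndependent_pair h), Fintype.card_fin]

variable [Finite K]

theorem card_pairs_apply_eq_one (hnd : B.Nondegenerate) :
    Nat.card {z : V × V // B z.1 z.2 = 1} =
      (Nat.card K ^ finrank K V - 1) * Nat.card K ^ (finrank K V - 1) := by
  classical
  have : Finite V := Module.finite_of_finite K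
  have : Fintype V := Fintype.ofFinite V
  have hfiber : ∀ x ∈ Finset.univ.erase 0,
      Nat.card {y : V // B x y = 1} = Nat.card K ^ (finrank K V - 1) := fun x hx =>
    Module.Dual.card_fiber_of_ne_zero
      (fun h => Finset.ne_of_mem_erase hx (hnd.1 x (by simp [h]))) 1
  rw [Nat.card_congr (Equiv.subtypeProdEquivSigmaSubtype fun x y => B x y = 1), Nat.card_sigma,
    ← Finset.add_sum_erase _ _ (Finset.mem_univ 0), Finset.sum_congr rfl hfiber, Finset.sum_const,
    Finset.card_erase_of_mem (Finset.mem_univ 0), Finset.card_univ, ← Nat.card_eq_fintype_card,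
    natCard_eq_pow_finrank (K := K) (V := V), smul_eq_mul]
  simp

theorem card_hyperbolicFamilies {m : ℕ} (hB : B.IsAlt) (hnd : B.Nondegenerate)
    (hd : finrank K V = 2 * m) :
    Nat.card (B.HyperbolicFamilies m) =
      Nat.card K ^ (m ^ 2) * ∏ i ∈ Finset.range m, (Nat.card K ^ (2 * (i + 1)) - 1) := by
  induction m generalizing V with
  | zero =>
    rw [Finset.prod_range_zero, zero_pow two_ne_zero, pow_zero, mul_one,
      Nat.card_eq_one_iff_unique]
    exact ⟨⟨fun _ _ => Subtype.ext (Subsingleton.elim _ _)⟩,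
      ⟨⟨(Fin.elim0, Fin.elim0), by simp [IsHyperbolicFamily]⟩⟩⟩
  | succ m ih =>
    have hfiber (z : {z : V × V // B z.1 z.2 = 1}) :
        Nat.card ((B.restrict (B.orthogonal (span K {z.1.1, z.1.2}))).HyperbolicFamilies m) =
          Nat.card K ^ (m ^ 2) * ∏ i ∈ Finset.range m, (Nat.card K ^ (2 * (i + 1)) - 1) :=
      ih (fun w => hB w) (hB.nondegenerate_restrict_orthogonal_span_pair hnd z.2)
        (by rw [hB.finrank_orthogonal_span_pair hnd z.2, hd]; omega)
    have : Finite V := Module.finite_of_finite K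
    have : Fintype {z : V × V // B z.1 z.2 = 1} := Fintype.ofFinite _
    rw [← Nat.card_congr (hyperbolicFamiliesSuccEquiv hB m), Nat.card_sigma,
      Finset.sum_congr rfl fun z _ => hfiber z, Finset.sum_const, Finset.card_univ,
      ← Nat.card_eq_fintype_card, card_pairs_apply_eq_one hnd, hd, Finset.prod_range_succ,
      smul_eq_mul, show 2 * (m + 1) - 1 = 2 * m + 1 by omega]
    ring

end FiniteDimensional

end LinearMap.BilinForm

theorem symp_eq_dotProduct {p n : ℕ} (x y : PV p n) : symp x y = x.2 ⬝ᵥ y.1 - x.1 ⬝ᵥ y.2 := by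
  simp [symp, dotProduct, Finset.sum_sub_distrib]

def sympForm (p n : ℕ) : LinearMap.BilinForm (ZMod p) (PV p n) :=
  LinearMap.mk₂ (ZMod p) symp
    (fun _ _ _ => by
      simp only [symp_eq_dotProduct, Prod.fst_add, Prod.snd_add, add_dotProduct]; ring)
    (fun _ _ _ => by
      simp only [symp_eq_dotProduct, Prod.smul_fst, Prod.smul_snd, smul_dotProduct, smul_eq_mul]
      ring)
    (fun _ _ _ => by
      simp only [symp_eq_dotProduct, Prod.fst_add, Prod.snd_add, dotProduct_add]; ring)
    (fun _ _ _ => by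
      simp only [symp_eq_dotProduct, Prod.smul_fst, Prod.smul_snd, dotProduct_smul, smul_eq_mul]
      ring)

theorem sympForm_apply {p n : ℕ} (x y : PV p n) : sympForm p n x y = symp x y := rfl

theorem sympForm_isAlt (p n : ℕ) : (sympForm p n).IsAlt := fun x => by
  simp [sympForm_apply, symp_eq_dotProduct, dotProduct_comm]

theorem sympForm_nondegenerate (p n : ℕ) : (sympForm p n).Nondegenerate := by
  refine (sympForm_isAlt p n).isRefl.nondegenerate_iff_separatingLeft.2 fun x hx => ?_
  ext i
  · simpa [sympForm_apply, symp_eq_dotProduct] using hx (0, Pi.single i 1)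
  · simpa [sympForm_apply, symp_eq_dotProduct] using hx (Pi.single i 1, 0)

theorem finrank_PV (p n : ℕ) [Fact p.Prime] : Module.finrank (ZMod p) (PV p n) = 2 * n := by
  simp [Module.finrank_prod, two_mul]

theorem stmt18_general (p n : ℕ) [Fact p.Prime] :
    Nat.card {xy : (Fin n → PV p n) × (Fin n → PV p n) //
      (∀ i j, symp (xy.1 i) (xy.2 j) = if i = j then 1 else 0) ∧
      (∀ i j, symp (xy.1 i) (xy.1 j) = 0) ∧
      (∀ i j, symp (xy.2 i) (xy.2 j) = 0)} =
    p ^ (n ^ 2) * ∏ i ∈ Finset.range n, (p ^ (2 * (i + 1)) - 1) := by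
  have h := LinearMap.BilinForm.card_hyperbolicFamilies (sympForm_isAlt p n)
    (sympForm_nondegenerate p n) (finrank_PV p n)
  rwa [Nat.card_zmod] at h

/-- the number of hyperbolic bases of `(ZMod p)^{2n}` (2n-tuples
satisfying the hyperbolic relations) is `p^{n²} · ∏_{i=1}^n (p^{2i} - 1)`,
the order of `Sp_{2n}(ZMod p)`. -/
theorem stmt18 (p n : ℕ) [Fact p.Prime] (hn : 1 ≤ n) :
    Nat.card {xy : (Fin n → PV p n) × (Fin n → PV p n) //
      (∀ i j, symp (xy.1 i) (xy.2 j) = if i = j then 1 else 0) ∧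
      (∀ i j, symp (xy.1 i) (xy.1 j) = 0) ∧
      (∀ i j, symp (xy.2 i) (xy.2 j) = 0)} =
    p ^ (n ^ 2) * ∏ i ∈ Finset.range n, (p ^ (2 * (i + 1)) - 1) :=
  stmt18_general p n
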